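/- arXiv:2104.13123 — 2 statements merged into one kernel-verified Lean document; each statement's English description precedes it below -/
import Mathlib

section
/- In a Coxeter group W with Bruhat order and length function ℓ, for every pair of elements u, v there is a unique element w = u*v (the Demazure product) such that the set product {u' v' : u' ≤ u, v' ≤ v} equals {x : x ≤ w}. Moreover u*v = u v' for some v' ≤ v with ℓ(uv') = ℓ(u) + ℓ(v'); in particular ℓ(u*v) ≤ ℓ(u) + ℓ(v), with u*v = uv if and only if ℓ(uv) = ℓ(u) + ℓ(v). -/
variable {B W : Type*} [Group W] {M : CoxeterMatrix B}

/-- Bruhat order on a Coxeter group, via the subword property: `x ≤ w` iff some reduced word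
for `w` has a subword whose product is `x`. -/
def CoxeterSystem.BruhatLE (cs : CoxeterSystem M W) (x w : W) : Prop :=
  ∃ ω : List B, cs.IsReduced ω ∧ cs.wordProd ω = w ∧
    ∃ ω' : List B, ω'.Sublist ω ∧ cs.wordProd ω' = x

/-- `d` is the Demazure product of `u` and `v`: the set of products `u'v'` with `u' ≤ u`,
`v' ≤ v` equals the Bruhat interval `{x | x ≤ d}`. -/
def CoxeterSystem.IsDemazureProd (cs : CoxeterSystem M W) (u v d : W) : Prop :=
  {x : W | ∃ a b : W, cs.BruhatLE a u ∧ cs.BruhatLE b v ∧ x = a * b} =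
    {x : W | cs.BruhatLE x d}

/-!
The product is built along a reduced word `ρ` of `v`: starting from `u`, multiply on the right by
each letter `s` of `ρ` if this increases the length, and skip the letter otherwise. When
`v < v s` we have `{b | b ≤ v s} = {b | b ≤ v} ∪ {b | b s ≤ v}`, and `{x | x ≤ w} ∪ {x | x s ≤ w}`
is the interval below the longer of `w` and `w s`; so every letter keeps
`{a b | a ≤ u, b ≤ v}` an interval. The letters kept form a subword `σ` of `ρ` with
`ℓ (u π σ) = ℓ u + |σ|`, which gives the remaining claims.

Both facts about intervals are proved for the chain description of the Bruhat order
(`x < x t` for reflections `t` with `ℓ x < ℓ (x t)`). That it agrees with the subword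
description rests on the strong exchange property, obtained from the parity representation of
`W` on `W × ZMod 2`, and on the lifting property.
-/

namespace List

theorem sublist_concat_iff {α : Type*} {l₁ l₂ : List α} {a : α} :
    l₁ <+ l₂ ++ [a] ↔ l₁ <+ l₂ ∨ ∃ t, l₁ = t ++ [a] ∧ t <+ l₂ := by
  constructor
  · intro h
    obtain ⟨t, r, rfl, ht, hr⟩ := sublist_append_iff.mp h
    rcases sublist_singleton.mp hr with rfl | rfl
    · simpa using Or.inl ht
    · exact Or.inr ⟨t, rfl, ht⟩
  · rintro (h | ⟨t, rfl, ht⟩)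
    · exact sublist_append_of_sublist_left h
    · exact ht.append_right [a]

end List

theorem conj_eq_iff_eq_conj {G : Type*} [Group G] {g t r : G} :
    g * t * g⁻¹ = r ↔ t = g⁻¹ * r * g := by
  constructor <;> rintro rfl <;> group

namespace CoxeterSystem

open List

variable (cs : CoxeterSystem M W)

local prefix:100 "s" => cs.simple
local prefix:100 "π" => cs.wordProd
local prefix:100 "ℓ" => cs.length
local prefix:100 "ris" => cs.rightInvSeq

section

variable [DecidableEq W]

noncomputable def parityPerm (i : B) : Equiv.Perm (W × ZMod 2) :=
  Function.Involutive.toPerm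
    (fun p ↦ (s i * p.1 * s i, p.2 + if p.1 = s i then 1 else 0)) <| by
      rintro ⟨t, ε⟩
      have hconj : s i * t * s i = s i ↔ t = s i := by
        rw [mul_assoc, mul_eq_left, mul_eq_one_iff_eq_inv, inv_simple]
      by_cases ht : t = s i <;> simp [ht, hconj, ← mul_assoc, add_assoc, CharTwo.add_self_eq_zero]

@[simp]
lemma parityPerm_apply (i : B) (t : W) (ε : ZMod 2) :
    cs.parityPerm i (t, ε) = (s i * t * s i, ε + if t = s i then 1 else 0) :=
  rfl

lemma parityPerm_mul_pow (i i' : B) (m : ℕ) (t : W) (ε : ZMod 2) :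
    ((cs.parityPerm i * cs.parityPerm i') ^ m) (t, ε) =
      ((s i * s i') ^ m * t * ((s i * s i') ^ m)⁻¹,
        ε + ∑ n ∈ Finset.range (2 * m), if t = (s i' * s i) ^ n * s i' then 1 else 0) := by
  induction m with
  | zero => simp
  | succ m ih =>
    have hsemiconj : s i' * (s i * s i') ^ m = (s i' * s i) ^ m * s i' :=
      (SemiconjBy.pow_right (by simp [SemiconjBy, mul_assoc]) m).eq
    have hinv : ((s i * s i') ^ m)⁻¹ = (s i' * s i) ^ m := by
      rw [← inv_pow, mul_inv_rev, inv_simple, inv_simple]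
    have hfirst :
        ((s i * s i') ^ m)⁻¹ * s i' * (s i * s i') ^ m = (s i' * s i) ^ (2 * m) * s i' := by
      rw [hinv, mul_assoc, hsemiconj, two_mul, pow_add, mul_assoc]
    have hsecond : (s i' * (s i * s i') ^ m)⁻¹ * s i * (s i' * (s i * s i') ^ m) =
        (s i' * s i) ^ (2 * m + 1) * s i' := by
      rw [mul_inv_rev, hinv, inv_simple, show 2 * m + 1 = m + (m + 1) by ring, pow_add, pow_succ']
      simp only [mul_assoc, hsemiconj]
    have e0 : (s i * s i') ^ m * t * ((s i * s i') ^ m)⁻¹ = s i' ↔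
        t = (s i' * s i) ^ (2 * m) * s i' := by
      rw [conj_eq_iff_eq_conj, hfirst]
    have e1 : s i' * ((s i * s i') ^ m * t * ((s i * s i') ^ m)⁻¹) * s i' = s i ↔
        t = (s i' * s i) ^ (2 * m + 1) * s i' := by
      rw [← hsecond, ← conj_eq_iff_eq_conj, mul_inv_rev, inv_simple]
      simp only [mul_assoc]
    rw [pow_succ', Equiv.Perm.mul_apply, ih, Equiv.Perm.mul_apply, parityPerm_apply,
      parityPerm_apply, Prod.mk.injEq]
    simp only [e0, e1]
    constructor
    · simp only [pow_succ', mul_inv_rev, inv_simple, mul_assoc]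
    · rw [show 2 * (m + 1) = 2 * m + 1 + 1 by ring, Finset.sum_range_succ, Finset.sum_range_succ]
      ring

lemma isLiftable_parityPerm : M.IsLiftable cs.parityPerm := by
  intro i i'
  ext ⟨t, ε⟩ : 1
  have hperiod : ∀ n, (s i' * s i) ^ (M i i' + n) = (s i' * s i) ^ n := by
    simp [pow_add]
  rw [parityPerm_mul_pow, simple_mul_simple_pow, two_mul, Finset.sum_range_add]
  simp [hperiod, CharTwo.add_self_eq_zero]

-- Tits' construction (Björner–Brenti, Thm. 1.4.3): through it, the parity of the number of
-- occurrences of a reflection in the right inversion sequence of a word depends only on the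
-- product of the word.
noncomputable def parityRep : W →* Equiv.Perm (W × ZMod 2) :=
  cs.lift ⟨cs.parityPerm, cs.isLiftable_parityPerm⟩

lemma parityRep_wordProd (ω : List B) (t : W) (ε : ZMod 2) :
    cs.parityRep (π ω) (t, ε) = (π ω * t * (π ω)⁻¹, ε + (ris ω).count t) := by
  induction ω generalizing ε with
  | nil => simp
  | cons i ω ih =>
    rw [wordProd_cons, map_mul, Equiv.Perm.mul_apply, ih, parityRep, lift_apply_simple,
      parityPerm_apply, rightInvSeq, count_cons]
    have hcond : π ω * t * (π ω)⁻¹ = s i ↔ (π ω)⁻¹ * s i * π ω = t :=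
      conj_eq_iff_eq_conj.trans eq_comm
    simp only [hcond, beq_iff_eq]
    simp only [mul_inv_rev, inv_simple, mul_assoc]
    push_cast [add_assoc]
    rfl

noncomputable def reflParity (w t : W) : ZMod 2 := (cs.parityRep w (t, 0)).2

lemma reflParity_wordProd (ω : List B) (t : W) : cs.reflParity (π ω) t = (ris ω).count t := by
  rw [reflParity, parityRep_wordProd, zero_add]

lemma parityRep_apply (w t : W) (ε : ZMod 2) :
    cs.parityRep w (t, ε) = (w * t * w⁻¹, ε + cs.reflParity w t) := by
  obtain ⟨ω, -, rfl⟩ := cs.exists_isReduced w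
  rw [parityRep_wordProd, reflParity_wordProd]

lemma reflParity_mul (x y t : W) :
    cs.reflParity (x * y) t = cs.reflParity y t + cs.reflParity x (y * t * y⁻¹) := by
  rw [reflParity, map_mul, Equiv.Perm.mul_apply, parityRep_apply, parityRep_apply, zero_add]

lemma reflParity_one (t : W) : cs.reflParity 1 t = 0 := by
  simpa using cs.reflParity_wordProd [] t

lemma reflParity_self {t : W} (ht : cs.IsReflection t) : cs.reflParity t t = 1 := by
  obtain ⟨u, i, rfl⟩ := ht
  -- the cocycle rule gives `r(t, t) = r(u⁻¹, t) + r(s, s) + r(u, s)` for `t = u s u⁻¹`,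
  -- and `r(u⁻¹, t) + r(u, s) = r(1, t) = 0`
  have hsimple : cs.reflParity (s i) (s i) = 1 := by
    simpa using cs.reflParity_wordProd [i] (s i)
  have hsplit := cs.reflParity_mul u (s i * u⁻¹) (u * s i * u⁻¹)
  have hcancel := cs.reflParity_mul u u⁻¹ (u * s i * u⁻¹)
  rw [cs.reflParity_mul (s i) u⁻¹] at hsplit
  simp only [mul_inv_rev, inv_inv, inv_simple, ← mul_assoc, mul_inv_cancel, inv_mul_cancel_right,
    inv_mul_cancel, one_mul, simple_mul_simple_self] at hsplit hcancel
  rw [reflParity_one] at hcancel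
  linear_combination hsplit + hsimple - hcancel

lemma reflParity_eq_zero_of_length_lt {v t : W} (h : ℓ v < ℓ (v * t)) :
    cs.reflParity v t = 0 := by
  obtain ⟨ζ, hζ, rfl⟩ := cs.exists_isReduced v
  have hnot : t ∉ ris ζ := fun hmem ↦
    (cs.isRightInversion_of_mem_rightInvSeq hζ hmem).2.not_gt h
  rw [reflParity_wordProd, count_eq_zero_of_not_mem hnot, Nat.cast_zero]

lemma reflParity_eq_one_of_length_mul_lt {w t : W} (ht : cs.IsReflection t)
    (h : ℓ (w * t) < ℓ w) : cs.reflParity w t = 1 := by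
  have hw : w * t * t = w := by rw [mul_assoc, ht.mul_self, mul_one]
  have hup : cs.reflParity (w * t) t = 0 := cs.reflParity_eq_zero_of_length_lt (by rwa [hw])
  have := cs.reflParity_mul (w * t) t t
  rw [hw, reflParity_self cs ht, ht.inv, ht.mul_self, one_mul, hup, add_zero] at this
  exact this

end

theorem exists_eraseIdx_eq_mul_of_length_mul_lt (ω : List B) {t : W} (ht : cs.IsReflection t)
    (h : ℓ (π ω * t) < ℓ (π ω)) : ∃ j < ω.length, π (ω.eraseIdx j) = π ω * t := by
  classical
  have hmem : t ∈ ris ω := by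
    by_contra hnot
    have := cs.reflParity_eq_one_of_length_mul_lt ht h
    rw [reflParity_wordProd, count_eq_zero_of_not_mem hnot, Nat.cast_zero] at this
    exact zero_ne_one this
  obtain ⟨j, hj, rfl⟩ := List.mem_iff_getElem.mp hmem
  refine ⟨j, by simpa using hj, ?_⟩
  rw [← List.getD_eq_getElem _ 1 hj, wordProd_mul_getD_rightInvSeq]

lemma isReduced_append_singleton_iff {ζ : List B} {i : B} :
    cs.IsReduced (ζ ++ [i]) ↔ cs.IsReduced ζ ∧ ℓ (π ζ) < ℓ (π ζ * s i) := by
  have hle := cs.length_wordProd_le ζ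
  have hstep := cs.length_mul_simple (π ζ) i
  simp only [IsReduced, wordProd_append, wordProd_singleton, length_append, length_singleton]
  omega

def BruhatStep (x y : W) : Prop := ∃ t, cs.IsReflection t ∧ y = x * t ∧ ℓ x < ℓ y

def ChainLE : W → W → Prop := Relation.ReflTransGen cs.BruhatStep

variable {cs}

lemma bruhatStep_mul_simple {w : W} {i : B} (h : ℓ w < ℓ (w * s i)) :
    cs.BruhatStep w (w * s i) :=
  ⟨s i, cs.isReflection_simple i, rfl, h⟩

lemma BruhatStep.chainLE {x y : W} (h : cs.BruhatStep x y) : cs.ChainLE x y :=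
  Relation.ReflTransGen.single h

lemma ChainLE.refl (w : W) : cs.ChainLE w w := Relation.ReflTransGen.refl

lemma ChainLE.trans {x y z : W} (hxy : cs.ChainLE x y) (hyz : cs.ChainLE y z) :
    cs.ChainLE x z :=
  Relation.ReflTransGen.trans hxy hyz

lemma ChainLE.length_le {x y : W} (h : cs.ChainLE x y) : ℓ x ≤ ℓ y := by
  induction h with
  | refl => rfl
  | tail _ hstep ih => obtain ⟨t, -, -, hlt⟩ := hstep; omega

lemma ChainLE.eq_of_length_le {x y : W} (h : cs.ChainLE x y) (hl : ℓ y ≤ ℓ x) : x = y := by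
  rcases Relation.ReflTransGen.cases_tail h with rfl | ⟨z, hxz, t, -, -, hlt⟩
  · rfl
  · have := ChainLE.length_le hxz; omega

lemma ChainLE.antisymm {x y : W} (hxy : cs.ChainLE x y) (hyx : cs.ChainLE y x) : x = y :=
  hxy.eq_of_length_le hyx.length_le

lemma ChainLE.exists_sublist {ω : List B} {x : W} (h : cs.ChainLE x (π ω)) :
    ∃ ω', ω' <+ ω ∧ π ω' = x := by
  induction h using Relation.ReflTransGen.head_induction_on with
  | refl => exact ⟨ω, Sublist.refl ω, rfl⟩
  | head hstep _ ih =>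
    obtain ⟨t, ht, rfl, hlt⟩ := hstep
    obtain ⟨ω', hω', hprod⟩ := ih
    have hdown : ℓ (π ω' * t) < ℓ (π ω') := by
      rwa [hprod, mul_assoc, ht.mul_self, mul_one]
    obtain ⟨j, -, hj⟩ := cs.exists_eraseIdx_eq_mul_of_length_mul_lt ω' ht hdown
    refine ⟨ω'.eraseIdx j, (eraseIdx_sublist ω' j).trans hω', ?_⟩
    rw [hj, hprod, mul_assoc, ht.mul_self, mul_one]

-- The subword property and the lifting property `ChainLE.mul_simple` are proved together by
-- induction on length: lifting below `w * s i` only needs the subword property below `w`.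
variable (cs) in
def SubwordPropertyBelow (n : ℕ) : Prop :=
  ∀ ω ω' : List B, cs.IsReduced ω → ω.length < n → ω' <+ ω →
    cs.ChainLE (π ω') (π ω)

lemma SubwordPropertyBelow.mono {m n : ℕ} (h : cs.SubwordPropertyBelow n) (hmn : m ≤ n) :
    cs.SubwordPropertyBelow m :=
  fun ω ω' hω hlen ↦ h ω ω' hω (by omega)

lemma SubwordPropertyBelow.chainLE_mul_simple_of_length_mul_lt {x z : W} {i : B}
    (hsub : cs.SubwordPropertyBelow (ℓ z + 1)) (hz : ℓ (z * s i) < ℓ z)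
    (hx : cs.ChainLE x z) :
    cs.ChainLE (x * s i) z := by
  obtain ⟨ζ, hζ, hζz⟩ := cs.exists_isReduced (z * s i)
  have hprod : π (ζ ++ [i]) = z := by
    rw [wordProd_append, wordProd_singleton, ← hζz, simple_mul_simple_cancel_right]
  have hred : cs.IsReduced (ζ ++ [i]) := cs.isReduced_append_singleton_iff.mpr
    ⟨hζ, by rwa [← hζz, simple_mul_simple_cancel_right]⟩
  have hlen : (ζ ++ [i]).length < ℓ z + 1 := by rw [← hred.eq, hprod]; omega
  rw [← hprod] at hx ⊢
  obtain ⟨ω', hω', rfl⟩ := hx.exists_sublist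
  rcases sublist_concat_iff.mp hω' with hω' | ⟨ξ, rfl, hξ⟩
  · simpa [wordProd_append] using hsub _ _ hred hlen (hω'.append_right [i])
  · simpa [wordProd_append] using hsub _ _ hred hlen (sublist_append_of_sublist_left hξ)

lemma SubwordPropertyBelow.chainLE_mul_simple {x w : W} {i : B}
    (hsub : cs.SubwordPropertyBelow (ℓ w)) (hw : ℓ w < ℓ (w * s i)) (hx : cs.ChainLE x w) :
    cs.ChainLE (x * s i) (w * s i) := by
  induction hx with
  | refl => exact ChainLE.refl _
  | @tail z _ hxz hzw ih =>
    obtain ⟨t, ht, rfl, hlt⟩ := hzw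
    rcases cs.length_mul_simple z i with hup | hdown
    · have hconj : cs.IsReflection (s i * t * s i) := by
        simpa using ht.conj (s i)
      refine (ih (hsub.mono hlt.le) (by omega)).trans
        (BruhatStep.chainLE ⟨s i * t * s i, hconj, by simp [mul_assoc], by omega⟩)
    · exact ((hsub.mono hlt).chainLE_mul_simple_of_length_mul_lt (by omega) hxz).trans
        ((BruhatStep.chainLE ⟨t, ht, rfl, hlt⟩).trans (bruhatStep_mul_simple hw).chainLE)

lemma subwordPropertyBelow (n : ℕ) : cs.SubwordPropertyBelow n := by
  induction n with
  | zero => intro ω ω' _ hlen; omega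
  | succ n ih =>
    intro ω ω' hω hlen hω'
    rcases eq_nil_or_concat' ω with rfl | ⟨ζ, i, rfl⟩
    · rw [sublist_nil.mp hω']
      exact ChainLE.refl _
    obtain ⟨hζ, hup⟩ := cs.isReduced_append_singleton_iff.mp hω
    have hζlen : ζ.length < n := by simpa using hlen
    rw [wordProd_append, wordProd_singleton]
    rcases sublist_concat_iff.mp hω' with hω' | ⟨ξ, rfl, hξ⟩
    · exact (ih ζ ω' hζ hζlen hω').trans (bruhatStep_mul_simple hup).chainLE
    · rw [wordProd_append, wordProd_singleton]
      exact (ih.mono (by rw [hζ.eq]; omega)).chainLE_mul_simple hup (ih ζ ξ hζ hζlen hξ)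

lemma chainLE_wordProd_of_sublist {ω ω' : List B} (hω : cs.IsReduced ω) (h : ω' <+ ω) :
    cs.ChainLE (π ω') (π ω) :=
  cs.subwordPropertyBelow (ω.length + 1) ω ω' hω (by omega) h

lemma ChainLE.mul_simple {x w : W} {i : B} (hw : ℓ w < ℓ (w * s i)) (hx : cs.ChainLE x w) :
    cs.ChainLE (x * s i) (w * s i) :=
  (cs.subwordPropertyBelow _).chainLE_mul_simple hw hx

lemma ChainLE.mul_simple_of_length_mul_lt {x w : W} {i : B} (hw : ℓ (w * s i) < ℓ w)
    (hx : cs.ChainLE x w) : cs.ChainLE (x * s i) w :=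
  (cs.subwordPropertyBelow _).chainLE_mul_simple_of_length_mul_lt hw hx

lemma bruhatLE_iff_chainLE {x w : W} : cs.BruhatLE x w ↔ cs.ChainLE x w := by
  constructor
  · rintro ⟨ω, hω, rfl, ω', hω', rfl⟩
    exact chainLE_wordProd_of_sublist hω hω'
  · intro h
    obtain ⟨ω, hω, rfl⟩ := cs.exists_isReduced w
    obtain ⟨ω', hω', rfl⟩ := h.exists_sublist
    exact ⟨ω, hω, rfl, ω', hω', rfl⟩

lemma chainLE_mul_simple_iff {x w : W} {i : B} (hw : ℓ w < ℓ (w * s i)) :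
    cs.ChainLE x (w * s i) ↔ cs.ChainLE x w ∨ cs.ChainLE (x * s i) w := by
  constructor
  · intro hx
    obtain ⟨ζ, hζ, rfl⟩ := cs.exists_isReduced w
    have hred : cs.IsReduced (ζ ++ [i]) := cs.isReduced_append_singleton_iff.mpr ⟨hζ, hw⟩
    rw [← wordProd_singleton, ← wordProd_append] at hx
    obtain ⟨ω', hω', rfl⟩ := hx.exists_sublist
    rcases sublist_concat_iff.mp hω' with hω' | ⟨ξ, rfl, hξ⟩
    · exact Or.inl (chainLE_wordProd_of_sublist hζ hω')
    · right
      simpa [wordProd_append] using chainLE_wordProd_of_sublist hζ hξ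
  · rintro (hx | hx)
    · exact hx.trans (bruhatStep_mul_simple hw).chainLE
    · simpa using hx.mul_simple hw

variable (cs) in
noncomputable def demazureMulSimple (w : W) (i : B) : W :=
  if ℓ w < ℓ (w * s i) then w * s i else w

lemma chainLE_demazureMulSimple_iff {x w : W} {i : B} :
    cs.ChainLE x (cs.demazureMulSimple w i) ↔ cs.ChainLE x w ∨ cs.ChainLE (x * s i) w := by
  unfold demazureMulSimple
  split_ifs with hw
  · exact chainLE_mul_simple_iff hw
  · have hdown : ℓ (w * s i) < ℓ w := by
      have := cs.length_mul_simple_ne w i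
      omega
    refine ⟨Or.inl, ?_⟩
    rintro (hx | hx)
    · exact hx
    · simpa using hx.mul_simple_of_length_mul_lt hdown

variable (cs) in
noncomputable def demazureProd (u : W) (ω : List B) : W := ω.foldl cs.demazureMulSimple u

lemma demazureProd_append_singleton (u : W) (ω : List B) (i : B) :
    cs.demazureProd u (ω ++ [i]) = cs.demazureMulSimple (cs.demazureProd u ω) i := by
  simp [demazureProd]

lemma exists_sublist_demazureProd_eq (u : W) (ω : List B) :
    ∃ σ, σ <+ ω ∧ cs.demazureProd u ω = u * π σ ∧
      ℓ (u * π σ) = ℓ u + σ.length := by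
  induction ω using List.reverseRecOn with
  | nil => exact ⟨[], Sublist.refl _, by simp [demazureProd], by simp⟩
  | append_singleton ω i ih =>
    obtain ⟨σ, hσ, hd, hlen⟩ := ih
    rw [demazureProd_append_singleton, demazureMulSimple, hd]
    split_ifs with hup
    · refine ⟨σ ++ [i], hσ.append_right [i], by simp [wordProd_append, mul_assoc], ?_⟩
      have := cs.length_mul_simple (u * π σ) i
      simp only [wordProd_append, wordProd_singleton, ← mul_assoc, length_append,
        length_singleton]
      omega
    · exact ⟨σ, sublist_append_of_sublist_left hσ, rfl, hlen⟩

lemma exists_mul_chainLE_mul_simple_iff {u v x : W} {i : B} (hv : ℓ v < ℓ (v * s i)) :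
    (∃ a b, cs.ChainLE a u ∧ cs.ChainLE b (v * s i) ∧ x = a * b) ↔
      (∃ a b, cs.ChainLE a u ∧ cs.ChainLE b v ∧ x = a * b) ∨
        (∃ a b, cs.ChainLE a u ∧ cs.ChainLE b v ∧ x * s i = a * b) := by
  simp only [chainLE_mul_simple_iff hv]
  constructor
  · rintro ⟨a, b, ha, hb | hb, rfl⟩
    · exact Or.inl ⟨a, b, ha, hb, rfl⟩
    · exact Or.inr ⟨a, b * s i, ha, hb, mul_assoc a b (s i)⟩
  · rintro (⟨a, b, ha, hb, rfl⟩ | ⟨a, b, ha, hb, hx⟩)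
    · exact ⟨a, b, ha, Or.inl hb, rfl⟩
    · refine ⟨a, b * s i, ha, Or.inr (by simpa using hb), ?_⟩
      rw [← mul_assoc, ← hx, simple_mul_simple_cancel_right]

lemma chainLE_demazureProd_iff (u : W) {ω : List B} (hω : cs.IsReduced ω) (x : W) :
    cs.ChainLE x (cs.demazureProd u ω) ↔
      ∃ a b, cs.ChainLE a u ∧ cs.ChainLE b (π ω) ∧ x = a * b := by
  induction ω using List.reverseRecOn generalizing x with
  | nil =>
    simp only [demazureProd, foldl_nil, wordProd_nil]
    refine ⟨fun hx ↦ ⟨x, 1, hx, ChainLE.refl 1, (mul_one x).symm⟩, ?_⟩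
    rintro ⟨a, b, ha, hb, rfl⟩
    rw [hb.eq_of_length_le (by simp), mul_one]
    exact ha
  | append_singleton ω i ih =>
    obtain ⟨hω, hup⟩ := cs.isReduced_append_singleton_iff.mp hω
    rw [demazureProd_append_singleton, chainLE_demazureMulSimple_iff, ih hω, ih hω,
      wordProd_append, wordProd_singleton, exists_mul_chainLE_mul_simple_iff hup]

lemma isDemazureProd_demazureProd (u : W) {ω : List B} (hω : cs.IsReduced ω) :
    cs.IsDemazureProd u (π ω) (cs.demazureProd u ω) := by
  ext x
  simp only [Set.mem_ofPred_eq, bruhatLE_iff_chainLE, chainLE_demazureProd_iff u hω]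

lemma IsDemazureProd.unique {u v d d' : W} (hd : cs.IsDemazureProd u v d)
    (hd' : cs.IsDemazureProd u v d') : d = d' := by
  have hiff : ∀ x, cs.BruhatLE x d ↔ cs.BruhatLE x d' := Set.ext_iff.mp (hd.symm.trans hd')
  simp only [bruhatLE_iff_chainLE] at hiff
  exact ChainLE.antisymm ((hiff d).mp (.refl d)) ((hiff d').mpr (.refl d'))

end CoxeterSystem

/-- In a Coxeter group `W` with Bruhat order `≤` and length `ℓ`, for every pair
`u, v` there is a unique element `w = u*v` (the Demazure product) with
`{u'v' : u' ≤ u, v' ≤ v} = {x : x ≤ w}`.  Moreover `u*v = uv'` for some `v' ≤ v` with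
`ℓ(uv') = ℓ(u) + ℓ(v')`; in particular `ℓ(u*v) ≤ ℓ(u) + ℓ(v)`, and `u*v = uv` iff
`ℓ(uv) = ℓ(u) + ℓ(v)`. -/
theorem demazure_product_existsUnique (cs : CoxeterSystem M W) (u v : W) :
    (∃! d : W, cs.IsDemazureProd u v d) ∧
    ∀ d : W, cs.IsDemazureProd u v d →
      (∃ v' : W, cs.BruhatLE v' v ∧ d = u * v' ∧
        cs.length (u * v') = cs.length u + cs.length v') ∧
      cs.length d ≤ cs.length u + cs.length v ∧
      (d = u * v ↔ cs.length (u * v) = cs.length u + cs.length v) := by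
  obtain ⟨ρ, hρ, rfl⟩ := cs.exists_isReduced v
  have hd := cs.isDemazureProd_demazureProd u hρ
  obtain ⟨σ, hσ, hdσ, hlen⟩ := cs.exists_sublist_demazureProd_eq u ρ
  have hσlen : cs.length (cs.wordProd σ) = σ.length := by
    have := cs.length_wordProd_le σ
    have := cs.length_mul_le u (cs.wordProd σ)
    omega
  have hσρ : σ.length ≤ cs.length (cs.wordProd ρ) := hρ.eq ▸ hσ.length_le
  refine ⟨⟨_, hd, fun d' hd' ↦ hd'.unique hd⟩, fun d' hd' ↦ ?_⟩
  obtain rfl := hd'.unique hd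
  rw [hdσ]
  refine ⟨⟨cs.wordProd σ, ⟨ρ, hρ, rfl, σ, hσ, rfl⟩, rfl, by omega⟩, by omega, ?_⟩
  constructor
  · intro h
    rw [mul_right_inj] at h
    rw [← h, hlen, hσlen]
  · intro h
    have hle : cs.ChainLE (u * cs.wordProd ρ) (u * cs.wordProd σ) :=
      hdσ ▸ (cs.chainLE_demazureProd_iff u hρ _).mpr ⟨u, _, .refl u, .refl _, rfl⟩
    exact (hle.eq_of_length_le (by omega)).symm
end

section
/- Let Γ be a monoid with a finitely generated filtration {Γ_i} (i.e., each Γ_i is finite, 1 ∈ Γ_0, Γ_i·Γ_j ⊆ Γ_{i+j}, ∪Γ_i = Γ, and there is m such that Γ_i = ∪_{j=1}^m Γ_j · Γ_{i−j} for all i > m), and let L be a field. Then the Rees ring R(L[Γ]) = ⊕_i L[Γ_i] t^i is a finitely generated L-algebra; in particular if Γ is commutative then both L[Γ] and R(L[Γ]) are Noetherian. -/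
/-!
Each `g ∈ F i` with `i > m` factors as `x * y` with `x ∈ F j`, `1 ≤ j ≤ m`, `y ∈ F (i - j)`, so
the monomial `single g 1 • tⁱ` is the product of `single x 1 • tʲ` with a monomial of smaller
degree. By strong induction the finitely many monomials of degree `≤ m` generate every
`single g 1 • tⁱ` with `g ∈ F i`, and these span the Rees algebra over `k`. Evaluation at
`t = 1` maps the Rees algebra onto `k[G]` as the filtration is exhaustive, so in the commutative
case both are finitely generated over a field, hence Noetherian.
-/

open Polynomial Pointwise

namespace MonoidAlgebra

variable {k G : Type*}

section Semiring

variable [CommSemiring k]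

theorem single_mem_supported {s : Set G} {g : G} (hg : g ∈ s) (c : k) :
    single g c ∈ supported k k s := by
  rw [mem_supported, coeff_single]
  exact (Finset.coe_subset.2 Finsupp.support_single_subset).trans (by simpa using hg)

variable [Monoid G]

theorem mul_mem_supported {s t : Set G} {x y : MonoidAlgebra k G}
    (hx : x ∈ supported k k s) (hy : y ∈ supported k k t) : x * y ∈ supported k k (s * t) := by
  classical
  rw [mem_supported] at hx hy ⊢
  refine (Finset.coe_subset.2 (support_coeff_mul_subset x y)).trans ?_
  rw [Finset.coe_mul]
  exact Set.mul_subset_mul hx hy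

variable (k) in
def reesAlgebra (F : ℕ → Set G) (hone : 1 ∈ F 0) (hmul : ∀ i j, F i * F j ⊆ F (i + j)) :
    Subalgebra k (MonoidAlgebra k G)[X] where
  carrier := {p | ∀ i, p.coeff i ∈ supported k k (F i)}
  mul_mem' {p q} hp hq i := by
    rw [Polynomial.coeff_mul]
    refine Submodule.sum_mem _ fun jl hjl => ?_
    rw [← Finset.HasAntidiagonal.mem_antidiagonal.1 hjl]
    exact supported_mono (hmul _ _) (mul_mem_supported (hp _) (hq _))
  add_mem' hp hq i := by
    rw [Polynomial.coeff_add]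
    exact add_mem (hp i) (hq i)
  algebraMap_mem' c i := by
    rw [Polynomial.algebraMap_apply, Polynomial.coeff_C]
    split_ifs with h
    · subst h
      exact single_mem_supported hone c
    · exact zero_mem _

variable {F : ℕ → Set G} {hone : 1 ∈ F 0} {hmul : ∀ i j, F i * F j ⊆ F (i + j)}

theorem monomial_mem_reesAlgebra {i : ℕ} {a : MonoidAlgebra k G} (ha : a ∈ supported k k (F i)) :
    monomial i a ∈ reesAlgebra k F hone hmul := fun j => by
  rw [Polynomial.coeff_monomial]
  split_ifs with h
  · exact h ▸ ha
  · exact zero_mem _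

theorem monomial_mem_of_mem_supported {A : Subalgebra k (MonoidAlgebra k G)[X]} {i : ℕ}
    {s : Set G} (hs : ∀ g ∈ s, monomial i (single g (1 : k)) ∈ A) {a : MonoidAlgebra k G}
    (ha : a ∈ supported k k s) : monomial i a ∈ A := by
  rw [supported_eq_span_single] at ha
  induction ha using Submodule.span_induction with
  | mem x hx =>
    obtain ⟨g, hg, rfl⟩ := hx
    exact hs g hg
  | zero => simp
  | add x y _ _ hx hy => simpa using add_mem hx hy
  | smul c x _ hx =>
    rw [← smul_monomial]
    exact A.smul_mem hx c

theorem reesAlgebra_le_of_monomial_mem {A : Subalgebra k (MonoidAlgebra k G)[X]}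
    (hA : ∀ i, ∀ g ∈ F i, monomial i (single g (1 : k)) ∈ A) : reesAlgebra k F hone hmul ≤ A :=
  fun p hp => p.as_sum_support ▸
    Subalgebra.sum_mem _ fun i _ => monomial_mem_of_mem_supported (hA i) (hp i)

variable (k F) in
def reesGenerators (m : ℕ) : Set (MonoidAlgebra k G)[X] :=
  ⋃ j ≤ m, (fun g => monomial j (single g (1 : k))) '' F j

theorem reesGenerators_finite (hfin : ∀ i, (F i).Finite) (m : ℕ) :
    (reesGenerators k F m).Finite :=
  (Set.finite_Iic m).biUnion fun j _ => (hfin j).image _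

theorem reesGenerators_subset_reesAlgebra (m : ℕ) :
    reesGenerators k F m ⊆ reesAlgebra k F hone hmul := by
  simp only [reesGenerators, Set.iUnion_subset_iff, Set.image_subset_iff]
  exact fun j _ g hg => monomial_mem_reesAlgebra (single_mem_supported hg 1)

theorem monomial_single_mem_adjoin_reesGenerators {m : ℕ}
    (hgen : ∀ i > m, F i ⊆ ⋃ j ∈ Finset.Icc 1 m, F j * F (i - j)) (i : ℕ) :
    ∀ g ∈ F i, monomial i (single g (1 : k)) ∈ Algebra.adjoin k (reesGenerators k F m) := by
  induction i using Nat.strong_induction_on with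
  | _ i ih =>
  intro g hg
  by_cases him : i ≤ m
  · exact Algebra.subset_adjoin <| Set.mem_biUnion him ⟨g, hg, rfl⟩
  obtain ⟨j, hj, x, hx, y, hy, rfl⟩ := Set.mem_iUnion₂.1 (hgen i (not_le.1 him) hg)
  obtain ⟨hj1, hjm⟩ := Finset.mem_Icc.1 hj
  have hsplit : monomial i (single (x * y) (1 : k)) =
      monomial j (single x 1) * monomial (i - j) (single y 1) := by
    rw [monomial_mul_monomial, single_mul_single, mul_one, Nat.add_sub_cancel' (by omega)]
  rw [hsplit]
  exact mul_mem (Algebra.subset_adjoin <| Set.mem_biUnion hjm ⟨x, hx, rfl⟩)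
    (ih (i - j) (by omega) y hy)

theorem adjoin_reesGenerators {m : ℕ}
    (hgen : ∀ i > m, F i ⊆ ⋃ j ∈ Finset.Icc 1 m, F j * F (i - j)) :
    Algebra.adjoin k (reesGenerators k F m) = reesAlgebra k F hone hmul :=
  le_antisymm (Algebra.adjoin_le (reesGenerators_subset_reesAlgebra m))
    (reesAlgebra_le_of_monomial_mem (monomial_single_mem_adjoin_reesGenerators hgen))

theorem reesAlgebra_fg (hfin : ∀ i, (F i).Finite) {m : ℕ}
    (hgen : ∀ i > m, F i ⊆ ⋃ j ∈ Finset.Icc 1 m, F j * F (i - j)) :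
    (reesAlgebra k F hone hmul).FG :=
  ⟨(reesGenerators_finite hfin m).toFinset, by simpa using adjoin_reesGenerators hgen⟩

end Semiring

section CommMonoid

variable [CommSemiring k] [CommMonoid G] {F : ℕ → Set G} {hone : 1 ∈ F 0}
  {hmul : ∀ i j, F i * F j ⊆ F (i + j)}

theorem surjective_aeval_one_comp_val (hcover : ∀ g, ∃ i, g ∈ F i) :
    Function.Surjective (((aeval (1 : MonoidAlgebra k G)).restrictScalars k).comp
      (reesAlgebra k F hone hmul).val) := by
  intro a
  induction a using induction_linear with
  | zero => exact ⟨0, map_zero _⟩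
  | add x y hx hy =>
    obtain ⟨p, rfl⟩ := hx
    obtain ⟨q, rfl⟩ := hy
    exact ⟨p + q, map_add _ _ _⟩
  | single g c =>
    obtain ⟨i, hi⟩ := hcover g
    exact ⟨⟨_, monomial_mem_reesAlgebra (single_mem_supported hi c)⟩, by simp⟩

theorem finiteType_of_reesAlgebra_fg (hcover : ∀ g, ∃ i, g ∈ F i)
    (hfg : (reesAlgebra k F hone hmul).FG) : Algebra.FiniteType k (MonoidAlgebra k G) :=
  have := (Subalgebra.fg_iff_finiteType _).1 hfg
  .of_surjective _ (surjective_aeval_one_comp_val hcover)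

end CommMonoid

end MonoidAlgebra

theorem rees_ring_of_monoid_algebra_finitely_generated_general
    (G : Type*) [Monoid G] (L : Type*) [Field L]
    (Γi : ℕ → Finset G)
    (hone : (1 : G) ∈ Γi 0)
    (hmul : ∀ i j, ∀ x ∈ Γi i, ∀ y ∈ Γi j, x * y ∈ Γi (i + j))
    (hcover : ∀ g : G, ∃ i, g ∈ Γi i)
    (hfg : ∃ m : ℕ, 1 ≤ m ∧ ∀ i > m,
      (Γi i : Set G) = ⋃ j ∈ Finset.Icc 1 m, (Γi j : Set G) * (Γi (i - j) : Set G)) :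
    (∃ S : Finset (Polynomial (MonoidAlgebra L G)),
      ((Algebra.adjoin L (S : Set (Polynomial (MonoidAlgebra L G)))) :
          Set (Polynomial (MonoidAlgebra L G))) =
        {p : Polynomial (MonoidAlgebra L G) | ∀ i : ℕ, ∀ g ∈ (p.coeff i).coeff.support, g ∈ Γi i}) ∧
    ((∀ a b : G, a * b = b * a) →
      IsNoetherianRing (MonoidAlgebra L G) ∧
      ∀ A : Subalgebra L (Polynomial (MonoidAlgebra L G)),
        (A : Set (Polynomial (MonoidAlgebra L G))) =
          {p : Polynomial (MonoidAlgebra L G) | ∀ i : ℕ, ∀ g ∈ (p.coeff i).coeff.support, g ∈ Γi i} →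
        IsNoetherianRing A) := by
  obtain ⟨m, -, hm⟩ := hfg
  have hmul' : ∀ i j, (Γi i : Set G) * Γi j ⊆ Γi (i + j) :=
    fun i j => Set.mul_subset_iff.2 (hmul i j)
  set R := MonoidAlgebra.reesAlgebra L (fun i => (Γi i : Set G)) hone hmul'
  have hrees : R.FG :=
    MonoidAlgebra.reesAlgebra_fg (fun i => (Γi i).finite_toSet) fun i hi => (hm i hi).le
  refine ⟨hrees.imp fun S hS => congrArg SetLike.coe hS, fun hcomm => ?_⟩
  let : CommMonoid G := { ‹Monoid G› with mul_comm := hcomm }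
  have := MonoidAlgebra.finiteType_of_reesAlgebra_fg hcover hrees
  refine ⟨Algebra.FiniteType.isNoetherianRing L _, fun A hA => ?_⟩
  obtain rfl : A = R := SetLike.coe_injective hA
  have := (Subalgebra.fg_iff_finiteType R).1 hrees
  exact Algebra.FiniteType.isNoetherianRing L R

/-- Let `Γ` be a monoid with a finitely generated filtration `{Γ_i}`
(each `Γ_i` finite, `1 ∈ Γ_0`, increasing, `Γ_i·Γ_j ⊆ Γ_{i+j}`, exhaustive, and
`Γ_i = ⋃_{j=1}^m Γ_j·Γ_{i−j}` for `i > m`), and let `L` be a field.  Then the Rees ring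
`R(L[Γ]) = ⊕_i L[Γ_i] tⁱ` — realized inside `L[Γ][t]` as the set of polynomials whose `i`-th
coefficient is supported on `Γ_i` — is a finitely generated `L`-algebra; in particular, if `Γ`
is commutative then both `L[Γ]` and `R(L[Γ])` are Noetherian. -/
theorem rees_ring_of_monoid_algebra_finitely_generated
    (G : Type*) [Monoid G] (L : Type*) [Field L]
    (Γi : ℕ → Finset G)
    (hone : (1 : G) ∈ Γi 0)
    (hmono : ∀ i, Γi i ⊆ Γi (i + 1))
    (hmul : ∀ i j, ∀ x ∈ Γi i, ∀ y ∈ Γi j, x * y ∈ Γi (i + j))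
    (hcover : ∀ g : G, ∃ i, g ∈ Γi i)
    (hfg : ∃ m : ℕ, 1 ≤ m ∧ ∀ i > m,
      (Γi i : Set G) = ⋃ j ∈ Finset.Icc 1 m, (Γi j : Set G) * (Γi (i - j) : Set G)) :
    (∃ S : Finset (Polynomial (MonoidAlgebra L G)),
      ((Algebra.adjoin L (S : Set (Polynomial (MonoidAlgebra L G)))) :
          Set (Polynomial (MonoidAlgebra L G))) =
        {p : Polynomial (MonoidAlgebra L G) | ∀ i : ℕ, ∀ g ∈ (p.coeff i).coeff.support, g ∈ Γi i}) ∧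
    ((∀ a b : G, a * b = b * a) →
      IsNoetherianRing (MonoidAlgebra L G) ∧
      ∀ A : Subalgebra L (Polynomial (MonoidAlgebra L G)),
        (A : Set (Polynomial (MonoidAlgebra L G))) =
          {p : Polynomial (MonoidAlgebra L G) | ∀ i : ℕ, ∀ g ∈ (p.coeff i).coeff.support, g ∈ Γi i} →
        IsNoetherianRing A) :=
  rees_ring_of_monoid_algebra_finitely_generated_general G L Γi hone hmul hcover hfg
end
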